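/- arXiv:2107.02013 — 2 statements merged into one kernel-verified Lean document; each statement's English description precedes it below -/
import Mathlib

section
/- For the uniform independence design on p ≥ 4 categories, the induced conditional design satisfies q_{ij} = Σ_{a : i,j ∈ a} μ_a = 1/r_p for all i ≠ j, where r_p = (2^{p−1} − p − 1)/(2^{p−2} − p + 1), and q_{ii} = 1. -/
/-!
The admissible sizes `2 ≤ |a| ≤ p - 2` are closed under complementation, so `μ = 2ν` and
`∑_{a ⊇ t} μ a` is `2 / (2^p - 2p - 2)` times the number of supersets of `t`
of admissible size. Supersets of `t` correspond to subsets of `tᶜ`, counted by binomial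
coefficients. For `t = {i, j}` only the `p - 1` supersets of size `p - 1` or `p` are missing,
leaving `2^(p-2) - p + 1`; for `t = {i}` also `{i}` itself is missing, leaving
`2^(p-1) - p - 1`, which is half the normalising constant.
-/

open Finset

theorem sum_range_choose_add_two (n : ℕ) :
    ∑ m ∈ range (n + 1), (n + 2).choose m + (n + 3) = 2 ^ (n + 2) := by
  rw [← Nat.sum_range_choose, sum_range_succ _ (n + 2), sum_range_succ _ (n + 1),
    Nat.choose_succ_self_right, Nat.choose_self]
  ring

section Supersets

variable {α : Type*} [Fintype α] [DecidableEq α]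

theorem card_filter_superset (t : Finset α) (P : ℕ → Prop) [DecidablePred P] :
    #{a | t ⊆ a ∧ P #a} =
      ∑ m ∈ range (#tᶜ + 1) with P (m + #t), (#tᶜ).choose m := by
  have hsupersets : ({a | t ⊆ a} : Finset (Finset α)) = tᶜ.powerset.image (t ∪ ·) := by
    rw [compl_eq_univ_sdiff, ← Icc_eq_image_powerset (subset_univ t)]
    ext a
    simp
  have hinj : Set.InjOn (t ∪ ·) (tᶜ.powerset : Set (Finset α)) := by
    intro b hb c hc hbc
    simp only [coe_powerset, Set.mem_preimage, Set.mem_powerset_iff, coe_subset,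
      subset_compl_iff_disjoint_right] at hb hc
    rw [← union_sdiff_cancel_left hb.symm, ← union_sdiff_cancel_left hc.symm]
    exact congrArg (· \ t) hbc
  rw [← filter_filter, hsupersets, card_filter, sum_image hinj, sum_filter]
  have hcard_union : ∀ b ∈ tᶜ.powerset, #(t ∪ b) = #b + #t := fun b hb => by
    rw [card_union_of_disjoint (disjoint_of_subset_right (mem_powerset.1 hb) disjoint_compl_right),
      add_comm]
  rw [sum_congr rfl fun b hb => by rw [hcard_union b hb],
    sum_powerset_apply_card (fun k => if P (k + #t) then 1 else 0)]
  simp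

theorem middle_card_compl_iff (a : Finset α) :
    (2 ≤ #aᶜ ∧ #aᶜ ≤ Fintype.card α - 2) ↔ (2 ≤ #a ∧ #a ≤ Fintype.card α - 2) := by
  have := card_le_univ a
  rw [card_compl]
  omega

theorem sum_filter_eq_card_middle (c : ℝ) (ν μ : Finset α → ℝ)
    (hν : ∀ a, ν a = if 2 ≤ #a ∧ #a ≤ Fintype.card α - 2 then c else 0)
    (hμ : ∀ a, μ a = ν a + ν aᶜ) (Q : Finset α → Prop) [DecidablePred Q] :
    ∑ a with Q a, μ a = 2 * c * #{a | Q a ∧ 2 ≤ #a ∧ #a ≤ Fintype.card α - 2} := by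
  have hμν : ∀ a, μ a = 2 * ν a := fun a => by
    simp only [hμ, hν aᶜ, middle_card_compl_iff, ← hν a, two_mul]
  simp only [hμν, hν, ← mul_sum, ← sum_filter, filter_filter, sum_const, nsmul_eq_mul]
  ring

theorem card_middle_superset_pair {n : ℕ} (hα : Fintype.card α = n + 4) {i j : α}
    (hij : i ≠ j) :
    #{a | (i ∈ a ∧ j ∈ a) ∧ 2 ≤ #a ∧ #a ≤ Fintype.card α - 2} + (n + 3) = 2 ^ (n + 2) := by
  have hsubset : #{a | (i ∈ a ∧ j ∈ a) ∧ 2 ≤ #a ∧ #a ≤ Fintype.card α - 2} =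
      #{a | {i, j} ⊆ a ∧ 2 ≤ #a ∧ #a ≤ Fintype.card α - 2} := by
    simp only [insert_subset_iff, singleton_subset_iff]
  have hpair : #{i, j} = 2 := card_pair hij
  have hmiddle : ∑ m ∈ range (Fintype.card α - 2 + 1) with 2 ≤ m + 2 ∧ m + 2 ≤ Fintype.card α - 2,
      (Fintype.card α - 2).choose m = ∑ m ∈ range (n + 1), (n + 2).choose m := by
    rw [hα, show n + 4 - 2 = n + 2 by omega]
    congr 1
    ext m
    simp only [mem_filter, mem_range]
    omega
  rw [hsubset, card_filter_superset _ fun k => 2 ≤ k ∧ k ≤ Fintype.card α - 2, card_compl,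
    hpair, hmiddle]
  exact sum_range_choose_add_two n

theorem card_middle_superset_singleton {n : ℕ} (hα : Fintype.card α = n + 4) (i : α) :
    #{a | i ∈ a ∧ 2 ≤ #a ∧ #a ≤ Fintype.card α - 2} + (n + 5) = 2 ^ (n + 3) := by
  have hsubset : #{a | i ∈ a ∧ 2 ≤ #a ∧ #a ≤ Fintype.card α - 2} =
      #{a | {i} ⊆ a ∧ 2 ≤ #a ∧ #a ≤ Fintype.card α - 2} := by
    simp only [singleton_subset_iff]
  have hmiddle : ∑ m ∈ range (Fintype.card α - 1 + 1) with 2 ≤ m + 1 ∧ m + 1 ≤ Fintype.card α - 2,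
      (Fintype.card α - 1).choose m = ∑ m ∈ Ico 1 (n + 2), (n + 3).choose m := by
    rw [hα, show n + 4 - 1 = n + 3 by omega, show n + 4 - 2 = n + 2 by omega]
    congr 1
    ext m
    simp only [mem_filter, mem_range, mem_Ico]
    omega
  have hrange := sum_range_eq_add_Ico (fun m => (n + 3).choose m) (by omega : 0 < n + 2)
  rw [hsubset, card_filter_superset _ fun k => 2 ≤ k ∧ k ≤ Fintype.card α - 2, card_compl,
    card_singleton, hmiddle, ← sum_range_choose_add_two (n + 1), hrange, Nat.choose_zero_right]
  ring

end Supersets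

/-- For the uniform independence design on `p ≥ 4` categories
(`ν a = 1/(2^p − 2p − 2)` when `2 ≤ |a| ≤ p−2` and `0` otherwise, `μ a = ν a + ν aᶜ`),
the induced conditional design satisfies `q i j = ∑_{a : i,j ∈ a} μ a = 1/r_p` for all
`i ≠ j` where `r_p = (2^{p−1} − p − 1)/(2^{p−2} − p + 1)`, and `q i i = 1`. -/
theorem uniform_design_moment_entries
    (p : ℕ) (hp : 4 ≤ p)
    (ν : Finset (Fin p) → ℝ)
    (hν : ∀ a : Finset (Fin p),
      ν a = if 2 ≤ a.card ∧ a.card ≤ p - 2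
            then 1 / ((2 : ℝ) ^ p - 2 * (p : ℝ) - 2) else 0)
    (μ : Finset (Fin p) → ℝ) (hμ : ∀ a : Finset (Fin p), μ a = ν a + ν aᶜ)
    (rp : ℝ)
    (hrp : rp = ((2 : ℝ) ^ (p - 1) - (p : ℝ) - 1) / ((2 : ℝ) ^ (p - 2) - (p : ℝ) + 1)) :
    (∀ i j : Fin p, i ≠ j →
      (∑ a ∈ Finset.filter (fun a : Finset (Fin p) => i ∈ a ∧ j ∈ a) Finset.univ, μ a)
        = 1 / rp) ∧
    (∀ i : Fin p,
      (∑ a ∈ Finset.filter (fun a : Finset (Fin p) => i ∈ a) Finset.univ, μ a) = 1) := by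
  obtain ⟨n, rfl⟩ : ∃ n, p = n + 4 := ⟨p - 4, by omega⟩
  have hcard : Fintype.card (Fin (n + 4)) = n + 4 := Fintype.card_fin _
  have hsum := sum_filter_eq_card_middle _ ν μ (by rwa [hcard]) hμ
  have hpow : (n : ℝ) + 3 ≤ 2 ^ (n + 2) := by exact_mod_cast (Nat.lt_two_pow_self : n + 2 < _)
  have hhalf_normaliser : (2 : ℝ) ^ (n + 3) - (n + 4) - 1 ≠ 0 := by
    rw [pow_succ]; linarith
  have hnormaliser : (2 : ℝ) ^ (n + 4) - 2 * (n + 4) - 2 ≠ 0 := by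
    rw [pow_succ, pow_succ]; linarith
  refine ⟨fun i j hij => ?_, fun i => ?_⟩
  · have hcount : (#{a | (i ∈ a ∧ j ∈ a) ∧ 2 ≤ #a ∧ #a ≤ Fintype.card (Fin (n + 4)) - 2} : ℝ) =
        2 ^ (n + 2) - (n + 3) := by
      rw [eq_sub_iff_add_eq]; exact_mod_cast card_middle_superset_pair hcard hij
    rw [hsum, hcount, hrp, one_div_div]
    push_cast
    field_simp
    ring
  · have hcount : (#{a | i ∈ a ∧ 2 ≤ #a ∧ #a ≤ Fintype.card (Fin (n + 4)) - 2} : ℝ) =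
        2 ^ (n + 3) - (n + 5) := by
      rw [eq_sub_iff_add_eq]; exact_mod_cast card_middle_superset_singleton hcard i
    rw [hsum, hcount]
    push_cast
    field_simp
    ring
end

section
/- Under the product mechanism with identifiable conditional designs μ^A and μ^B (i.e., {v_a : μ_a^A > 0} spans ℝ^p and {v_b : μ_b^B > 0} spans ℝ^q), X ⊥ Y if and only if A ⊥ B. -/
/-!
Independence `W = w_X w_Yᵀ` says that the matrix `D := W - w_X w_Yᵀ` vanishes, while `A ⊥ B` says
that every block sum `v_aᵀ D v_b` over designed pairs vanishes. Identifiability lets one peel off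
the two sides in turn: for a fixed `b` the vector `D v_b` is orthogonal to all `v_a`, hence zero,
and then every row of `D` is orthogonal to all `v_b`, hence zero.
-/

open Finset

variable {α β : Type*}

/-- For `R = ℝ` this is identifiability of a design supported on `S`: the indicator vectors of
the members of `S` span `ℝ^α`. -/
def Identifiable (R : Type*) [AddCommMonoid R] (S : Set (Finset α)) : Prop :=
  ∀ u : α → R, (∀ a ∈ S, ∑ x ∈ a, u x = 0) → u = 0

theorem Identifiable.eq_zero_of_sum_sum_eq_zero {R : Type*} [AddCommMonoid R]
    {S : Set (Finset α)} {T : Set (Finset β)} (hS : Identifiable R S) (hT : Identifiable R T) {M : α → β → R}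
    (hM : ∀ a ∈ S, ∀ b ∈ T, ∑ x ∈ a, ∑ y ∈ b, M x y = 0) : M = 0 := by
  have hcols : ∀ b ∈ T, ∀ x, ∑ y ∈ b, M x y = 0 := fun b hb =>
    congrFun (hS (fun x => ∑ y ∈ b, M x y) fun a ha => hM a ha b hb)
  funext x
  exact hT (M x) fun b hb => hcols b hb x

theorem product_mechanism_independence_iff_general
    (p q : ℕ) (W : Fin p → Fin q → ℝ)
    (μA : Finset (Fin p) → ℝ)
    (μB : Finset (Fin q) → ℝ)
    (hidA : ∀ u : Fin p → ℝ,
      (∀ a : Finset (Fin p), 0 < μA a → (∑ x ∈ a, u x) = 0) → u = 0)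
    (hidB : ∀ u : Fin q → ℝ,
      (∀ b : Finset (Fin q), 0 < μB b → (∑ y ∈ b, u y) = 0) → u = 0)
    (wX : Fin p → ℝ)
    (wY : Fin q → ℝ) :
    (∀ x y, W x y = wX x * wY y) ↔
    (∀ (a : Finset (Fin p)) (b : Finset (Fin q)), 0 < μA a * μB b →
      (∑ x ∈ a, ∑ y ∈ b, W x y) = (∑ x ∈ a, wX x) * (∑ y ∈ b, wY y)) := by
  constructor
  · intro hind a b _
    simp only [hind, sum_mul_sum]
  · intro hAB
    have hA : Identifiable ℝ {a | 0 < μA a} := fun u hu => hidA u hu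
    have hB : Identifiable ℝ {b | 0 < μB b} := fun u hu => hidB u hu
    have hD : (fun x y => W x y - wX x * wY y) = 0 :=
      hA.eq_zero_of_sum_sum_eq_zero hB fun a ha b hb => by
        simp only [sum_sub_distrib, ← sum_mul_sum, hAB a b (mul_pos ha hb), sub_self]
    intro x y
    exact sub_eq_zero.mp (congrFun (congrFun hD x) y)

/-- Under the product mechanism with identifiable conditional designs
`μ^A` and `μ^B` (indicator vectors of positively weighted subsets span the full spaces),
`X ⊥ Y` if and only if `A ⊥ B`, where `A ⊥ B` means
`v_aᵀ W v_b = (v_aᵀ w_X)(v_bᵀ w_Y)` for all `a, b` with `μ_a^A μ_b^B > 0`. -/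
theorem product_mechanism_independence_iff
    (p q : ℕ) (W : Fin p → Fin q → ℝ) (hW0 : ∀ x y, 0 ≤ W x y)
    (hWsum : ∑ x, ∑ y, W x y = 1)
    (μA : Finset (Fin p) → ℝ) (hμA0 : ∀ a, 0 ≤ μA a)
    (hμA1 : ∀ x : Fin p,
      ∑ a ∈ Finset.filter (fun a : Finset (Fin p) => x ∈ a) Finset.univ, μA a = 1)
    (μB : Finset (Fin q) → ℝ) (hμB0 : ∀ b, 0 ≤ μB b)
    (hμB1 : ∀ y : Fin q,
      ∑ b ∈ Finset.filter (fun b : Finset (Fin q) => y ∈ b) Finset.univ, μB b = 1)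
    (hidA : ∀ u : Fin p → ℝ,
      (∀ a : Finset (Fin p), 0 < μA a → (∑ x ∈ a, u x) = 0) → u = 0)
    (hidB : ∀ u : Fin q → ℝ,
      (∀ b : Finset (Fin q), 0 < μB b → (∑ y ∈ b, u y) = 0) → u = 0)
    (wX : Fin p → ℝ) (hwX : ∀ x, wX x = ∑ y, W x y)
    (wY : Fin q → ℝ) (hwY : ∀ y, wY y = ∑ x, W x y) :
    (∀ x y, W x y = wX x * wY y) ↔
    (∀ (a : Finset (Fin p)) (b : Finset (Fin q)), 0 < μA a * μB b →
      (∑ x ∈ a, ∑ y ∈ b, W x y) = (∑ x ∈ a, wX x) * (∑ y ∈ b, wY y)) :=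
  product_mechanism_independence_iff_general p q W μA μB hidA hidB wX wY
end
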